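/- arXiv:2104.02009 — 5 statements merged into one kernel-verified Lean document; each statement's English description precedes it below -/
import Mathlib

section
/- Suppose (u, r, v, Λ) and (ũ, r̃, ṽ, Λ̃) are two separable matching models (as in the context) that induce the SAME conditional match probability functions σ_c on ℝ^{d_z}×ℝ^C×ℝ^C for every c ∈ {1,…,C}. Assume: (i) scale normalization: there exists ȳ ∈ ℝ^C with (r^c)'(ȳ_c) = (r̃^c)'(ȳ_c) = 1 for every c; (ii) (r^c)'(t) ≠ 0 and (r̃^c)'(t) ≠ 0 for every t ∈ ℝ and every c; (iii) for every c there exist z ∈ ℝ^{d_z} and k ∈ {1,…,d_z} with ∂u^c/∂z_k(z) ≠ 0; (iv) rank condition: for every (z,y) ∈ ℝ^{d_z}×ℝ^C there exist w^1, w^2 ∈ ℝ^C such that the 2C×2C matrix Π(z,y,w^1,w^2) is invertible. Then for every c ∈ {1,…,C}, every k ∈ {1,…,d_z}, every z ∈ ℝ^{d_z} and every t ∈ ℝ: ∂u^c/∂z_k(z) = ∂ũ^c/∂z_k(z), ∂v^c/∂z_k(z) = ∂ṽ^c/∂z_k(z), and (r^c)'(t) = (r̃^c)'(t). -/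
/-!
Write `a_d = u^d(z) + r^d(y_d)` and `b_d = v^d(z) + w_d` for the arguments of `Λ_c`. By the
chain rule, `∂σ_c/∂y_d = (r^d)'(y_d) ∂_{a_d}Λ_c`, `∂σ_c/∂w_d = ∂_{b_d}Λ_c`, and hence
`∂σ_c/∂z_k = Σ_d ∂_{a_d}Λ_c ∂u^d/∂z_k + Σ_d ∂_{b_d}Λ_c ∂v^d/∂z_k` is `Π` applied to the vector
`(∂u^d/∂z_k / (r^d)'(y_d), ∂v^d/∂z_k)_d`. Both models have the same `σ`, hence the same `Π` and
the same `∂σ/∂z_k`, so invertibility of `Π` identifies this vector. At `y = ȳ` it gives the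
`z`-derivatives of `u` and `v`; moving `y_c` to an arbitrary `t` at a point where `∂u^c/∂z_k ≠ 0`
then gives `(r^c)'(t)`.
-/

/-- The conditional match probability of college `c` induced by a separable
matching model `(u, r, v, Λ)`:
`σ_c(z,y,w) = Λ_c(u^1(z)+r^1(y_1),…,u^C(z)+r^C(y_C), v^1(z)+w_1,…,v^C(z)+w_C)`. -/
noncomputable def sigmaSep (C dz : ℕ)
    (u v : Fin C → (Fin dz → ℝ) → ℝ) (r : Fin C → ℝ → ℝ)
    (Λ : Fin C → ((Fin C → ℝ) × (Fin C → ℝ)) → ℝ)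
    (c : Fin C) (z : Fin dz → ℝ) (y w : Fin C → ℝ) : ℝ :=
  Λ c (fun d => u d z + r d (y d), fun d => v d z + w d)

/-- The `2C × 2C` matrix `Π(z,y,w¹,w²)` whose `c`-th row (`Sum.inl c`) is the
gradient of `σ_c` with respect to `(y_1,…,y_C,w_1,…,w_C)` evaluated at
`(z,y,w¹)`, and whose `(C+c)`-th row (`Sum.inr c`) is the same gradient
evaluated at `(z,y,w²)`. -/
noncomputable def PiMat (C dz : ℕ)
    (σ : Fin C → (Fin dz → ℝ) → (Fin C → ℝ) → (Fin C → ℝ) → ℝ)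
    (z : Fin dz → ℝ) (y w1 w2 : Fin C → ℝ) :
    Matrix (Fin C ⊕ Fin C) (Fin C ⊕ Fin C) ℝ :=
  Matrix.of fun i j =>
    match i, j with
    | Sum.inl c, Sum.inl d => deriv (fun t => σ c z (Function.update y d t) w1) (y d)
    | Sum.inl c, Sum.inr d => deriv (fun t => σ c z y (Function.update w1 d t)) (w1 d)
    | Sum.inr c, Sum.inl d => deriv (fun t => σ c z (Function.update y d t) w2) (y d)
    | Sum.inr c, Sum.inr d => deriv (fun t => σ c z y (Function.update w2 d t)) (w2 d)

open Function Matrix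

lemma ContinuousLinearMap.apply_prod_eq_sum {ι : Type*} [Fintype ι] [DecidableEq ι]
    (L : (ι → ℝ) × (ι → ℝ) →L[ℝ] ℝ) (a b : ι → ℝ) :
    L (a, b) = ∑ d, a d * L (Pi.single d 1, 0) + ∑ d, b d * L (0, Pi.single d 1) := by
  have hab : (a, b) = ∑ d, a d • ((Pi.single d 1 : ι → ℝ), (0 : ι → ℝ))
      + ∑ d, b d • ((0 : ι → ℝ), (Pi.single d 1 : ι → ℝ)) := by
    ext e <;> simp [Prod.fst_sum, Prod.snd_sum, Pi.single_apply]
  rw [hab, map_add, map_sum, map_sum]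
  simp only [map_smul, smul_eq_mul]

lemma hasDerivAt_pi_comp_update {ι : Type*} [DecidableEq ι] (g : ι → ℝ → ℝ) (y : ι → ℝ) (d : ι)
    {g' : ℝ} (hg : HasDerivAt (g d) g' (y d)) :
    HasDerivAt (fun t e => g e (update y d t e)) (Pi.single d g') (y d) := by
  rw [hasDerivAt_pi]
  intro e
  rcases eq_or_ne e d with rfl | he
  · simpa using hg
  · simpa [he] using hasDerivAt_const (y d) (g e (y e))

lemma hasDerivAt_comp_update_self {n : ℕ} {f : (Fin n → ℝ) → ℝ} (hf : Differentiable ℝ f)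
    (z : Fin n → ℝ) (k : Fin n) :
    HasDerivAt (fun s => f (update z k s)) (deriv (fun s => f (update z k s)) (z k)) (z k) :=
  ((hf _).comp (z k) (hasDerivAt_update z k (z k)).differentiableAt).hasDerivAt

section SeparableModel

variable {C dz : ℕ} (u v : Fin C → (Fin dz → ℝ) → ℝ) (r : Fin C → ℝ → ℝ)
  (Λ : Fin C → ((Fin C → ℝ) × (Fin C → ℝ)) → ℝ)

def sigmaSepArg (z : Fin dz → ℝ) (y w : Fin C → ℝ) : (Fin C → ℝ) × (Fin C → ℝ) :=
  (fun d => u d z + r d (y d), fun d => v d z + w d)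

noncomputable def normalizedZPartials (z : Fin dz → ℝ) (y : Fin C → ℝ) (k : Fin dz) :
    Fin C ⊕ Fin C → ℝ :=
  Sum.elim (fun d => deriv (fun s => u d (update z k s)) (z k) / deriv (r d) (y d))
    (fun d => deriv (fun s => v d (update z k s)) (z k))

variable {u v r Λ}

lemma hasDerivAt_sigmaSepArg_update_z (hu : ∀ d, Differentiable ℝ (u d))
    (hv : ∀ d, Differentiable ℝ (v d)) (z : Fin dz → ℝ) (y w : Fin C → ℝ) (k : Fin dz) :
    HasDerivAt (fun s => sigmaSepArg u v r (update z k s) y w)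
      (fun d => deriv (fun s => u d (update z k s)) (z k),
        fun d => deriv (fun s => v d (update z k s)) (z k)) (z k) :=
  (hasDerivAt_pi.2 fun d => (hasDerivAt_comp_update_self (hu d) z k).add_const _).prodMk
    (hasDerivAt_pi.2 fun d => (hasDerivAt_comp_update_self (hv d) z k).add_const _)

lemma hasDerivAt_sigmaSepArg_update_y (hr : ∀ d, Differentiable ℝ (r d))
    (z : Fin dz → ℝ) (y w : Fin C → ℝ) (d : Fin C) :
    HasDerivAt (fun t => sigmaSepArg u v r z (update y d t) w)
      (Pi.single d (deriv (r d) (y d)), 0) (y d) :=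
  (hasDerivAt_pi_comp_update (fun e s => u e z + r e s) y d
    ((hr d (y d)).hasDerivAt.const_add _)).prodMk (hasDerivAt_const _ _)

lemma hasDerivAt_sigmaSepArg_update_w (z : Fin dz → ℝ) (y w : Fin C → ℝ) (d : Fin C) :
    HasDerivAt (fun t => sigmaSepArg u v r z y (update w d t)) (0, Pi.single d 1) (w d) :=
  (hasDerivAt_const _ _).prodMk
    (hasDerivAt_pi_comp_update (fun e s => v e z + s) w d ((hasDerivAt_id _).const_add _))

lemma deriv_sigmaSep_update_z {c : Fin C} (hΛ : Differentiable ℝ (Λ c))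
    (hu : ∀ d, Differentiable ℝ (u d)) (hv : ∀ d, Differentiable ℝ (v d))
    (z : Fin dz → ℝ) (y w : Fin C → ℝ) (k : Fin dz) :
    deriv (fun s => sigmaSep C dz u v r Λ c (update z k s) y w) (z k) =
      fderiv ℝ (Λ c) (sigmaSepArg u v r z y w)
        (fun d => deriv (fun s => u d (update z k s)) (z k),
          fun d => deriv (fun s => v d (update z k s)) (z k)) :=
  ((hΛ (sigmaSepArg u v r z y w)).hasFDerivAt.comp_hasDerivAt_of_eq _
    (hasDerivAt_sigmaSepArg_update_z hu hv z y w k)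
    (by simp [sigmaSepArg])).deriv

lemma deriv_sigmaSep_update_y {c : Fin C} (hΛ : Differentiable ℝ (Λ c))
    (hr : ∀ d, Differentiable ℝ (r d)) (z : Fin dz → ℝ) (y w : Fin C → ℝ) (d : Fin C) :
    deriv (fun t => sigmaSep C dz u v r Λ c z (update y d t) w) (y d) =
      deriv (r d) (y d) * fderiv ℝ (Λ c) (sigmaSepArg u v r z y w) (Pi.single d 1, 0) := by
  refine ((hΛ (sigmaSepArg u v r z y w)).hasFDerivAt.comp_hasDerivAt_of_eq _
    (hasDerivAt_sigmaSepArg_update_y hr z y w d) (by simp [sigmaSepArg])).deriv.trans ?_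
  rw [← smul_eq_mul, ← map_smul, Prod.smul_mk, smul_zero, ← Pi.single_smul', smul_eq_mul, mul_one]

lemma deriv_sigmaSep_update_w {c : Fin C} (hΛ : Differentiable ℝ (Λ c))
    (z : Fin dz → ℝ) (y w : Fin C → ℝ) (d : Fin C) :
    deriv (fun t => sigmaSep C dz u v r Λ c z y (update w d t)) (w d) =
      fderiv ℝ (Λ c) (sigmaSepArg u v r z y w) (0, Pi.single d 1) :=
  ((hΛ (sigmaSepArg u v r z y w)).hasFDerivAt.comp_hasDerivAt_of_eq _
    (hasDerivAt_sigmaSepArg_update_w z y w d)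
    (by simp [sigmaSepArg])).deriv

lemma piMat_mulVec_normalizedZPartials (hΛ : ∀ c, Differentiable ℝ (Λ c))
    (hu : ∀ d, Differentiable ℝ (u d)) (hv : ∀ d, Differentiable ℝ (v d))
    (hr : ∀ d, Differentiable ℝ (r d))
    (z : Fin dz → ℝ) (y : Fin C → ℝ) (hr0 : ∀ d, deriv (r d) (y d) ≠ 0)
    (w1 w2 : Fin C → ℝ) (k : Fin dz) :
    PiMat C dz (sigmaSep C dz u v r Λ) z y w1 w2 *ᵥ normalizedZPartials u v r z y k =
      Sum.elim (fun c => deriv (fun s => sigmaSep C dz u v r Λ c (update z k s) y w1) (z k))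
        (fun c => deriv (fun s => sigmaSep C dz u v r Λ c (update z k s) y w2) (z k)) := by
  have row : ∀ c w,
      ∑ d, deriv (fun t => sigmaSep C dz u v r Λ c z (update y d t) w) (y d) *
          (deriv (fun s => u d (update z k s)) (z k) / deriv (r d) (y d)) +
        ∑ d, deriv (fun t => sigmaSep C dz u v r Λ c z y (update w d t)) (w d) *
          deriv (fun s => v d (update z k s)) (z k) =
      deriv (fun s => sigmaSep C dz u v r Λ c (update z k s) y w) (z k) := by
    intro c w
    rw [deriv_sigmaSep_update_z (hΛ c) hu hv, ContinuousLinearMap.apply_prod_eq_sum]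
    congr 1 <;> refine Finset.sum_congr rfl fun d _ => ?_
    · rw [deriv_sigmaSep_update_y (hΛ c) hr]
      field_simp [hr0 d]
    · rw [deriv_sigmaSep_update_w (hΛ c), mul_comm]
  ext (c | c) <;>
    simp only [mulVec, dotProduct, PiMat, of_apply, Fintype.sum_sum_type, normalizedZPartials,
      Sum.elim_inl, Sum.elim_inr, row]

end SeparableModel

lemma normalizedZPartials_eq_of_sigmaSep_eq {C dz : ℕ} {u v u' v' : Fin C → (Fin dz → ℝ) → ℝ}
    {r r' : Fin C → ℝ → ℝ} {Λ Λ' : Fin C → ((Fin C → ℝ) × (Fin C → ℝ)) → ℝ}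
    (hu : ∀ d, Differentiable ℝ (u d)) (hv : ∀ d, Differentiable ℝ (v d))
    (hr : ∀ d, Differentiable ℝ (r d)) (hΛ : ∀ c, Differentiable ℝ (Λ c))
    (hu' : ∀ d, Differentiable ℝ (u' d)) (hv' : ∀ d, Differentiable ℝ (v' d))
    (hr' : ∀ d, Differentiable ℝ (r' d)) (hΛ' : ∀ c, Differentiable ℝ (Λ' c))
    (hσ : sigmaSep C dz u v r Λ = sigmaSep C dz u' v' r' Λ')
    (z : Fin dz → ℝ) (y : Fin C → ℝ) (hr0 : ∀ d, deriv (r d) (y d) ≠ 0)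
    (hr0' : ∀ d, deriv (r' d) (y d) ≠ 0) {w1 w2 : Fin C → ℝ}
    (hP : IsUnit (PiMat C dz (sigmaSep C dz u v r Λ) z y w1 w2)) (k : Fin dz) :
    normalizedZPartials u v r z y k = normalizedZPartials u' v' r' z y k := by
  apply mulVec_injective_iff_isUnit.2 hP
  rw [piMat_mulVec_normalizedZPartials hΛ hu hv hr z y hr0, hσ,
    piMat_mulVec_normalizedZPartials hΛ' hu' hv' hr' z y hr0']

theorem stmt_0_general (C dz : ℕ)
    (u v u' v' : Fin C → (Fin dz → ℝ) → ℝ)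
    (r r' : Fin C → ℝ → ℝ)
    (Λ Λ' : Fin C → ((Fin C → ℝ) × (Fin C → ℝ)) → ℝ)
    (hu : ∀ c, ContDiff ℝ 1 (u c)) (hv : ∀ c, ContDiff ℝ 1 (v c))
    (hu' : ∀ c, ContDiff ℝ 1 (u' c)) (hv' : ∀ c, ContDiff ℝ 1 (v' c))
    (hr : ∀ c, ContDiff ℝ 1 (r c)) (hr' : ∀ c, ContDiff ℝ 1 (r' c))
    (hΛ : ∀ c, ContDiff ℝ 1 (Λ c)) (hΛ' : ∀ c, ContDiff ℝ 1 (Λ' c))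
    (hσeq : ∀ (c : Fin C) (z : Fin dz → ℝ) (y w : Fin C → ℝ),
      sigmaSep C dz u v r Λ c z y w = sigmaSep C dz u' v' r' Λ' c z y w)
    -- (i) scale normalization
    (hnorm : ∃ ybar : Fin C → ℝ, ∀ c,
      deriv (r c) (ybar c) = 1 ∧ deriv (r' c) (ybar c) = 1)
    -- (ii) the derivatives of r and r' never vanish
    (hrne : ∀ (c : Fin C) (t : ℝ), deriv (r c) t ≠ 0 ∧ deriv (r' c) t ≠ 0)
    -- (iii) for every c, some partial derivative of u^c is nonzero somewhere
    (hune : ∀ c : Fin C, ∃ (z : Fin dz → ℝ) (k : Fin dz),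
      deriv (fun s => u c (Function.update z k s)) (z k) ≠ 0)
    -- (iv) rank condition on Π
    (hrank : ∀ (z : Fin dz → ℝ) (y : Fin C → ℝ), ∃ w1 w2 : Fin C → ℝ,
      IsUnit (PiMat C dz (sigmaSep C dz u v r Λ) z y w1 w2)) :
    ∀ (c : Fin C) (k : Fin dz) (z : Fin dz → ℝ) (t : ℝ),
      deriv (fun s => u c (Function.update z k s)) (z k) =
        deriv (fun s => u' c (Function.update z k s)) (z k) ∧
      deriv (fun s => v c (Function.update z k s)) (z k) =
        deriv (fun s => v' c (Function.update z k s)) (z k) ∧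
      deriv (r c) t = deriv (r' c) t := by
  have hpartials (z : Fin dz → ℝ) (y : Fin C → ℝ) (k : Fin dz) :
      normalizedZPartials u v r z y k = normalizedZPartials u' v' r' z y k := by
    obtain ⟨w1, w2, hP⟩ := hrank z y
    exact normalizedZPartials_eq_of_sigmaSep_eq
      (fun c => (hu c).differentiable one_ne_zero) (fun c => (hv c).differentiable one_ne_zero)
      (fun c => (hr c).differentiable one_ne_zero) (fun c => (hΛ c).differentiable one_ne_zero)
      (fun c => (hu' c).differentiable one_ne_zero) (fun c => (hv' c).differentiable one_ne_zero)
      (fun c => (hr' c).differentiable one_ne_zero) (fun c => (hΛ' c).differentiable one_ne_zero)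
      (funext fun c => funext fun z => funext fun y => funext (hσeq c z y))
      z y (fun d => (hrne d _).1) (fun d => (hrne d _).2) hP k
  obtain ⟨ybar, hybar⟩ := hnorm
  have hU (c : Fin C) (z : Fin dz → ℝ) (k : Fin dz) :
      deriv (fun s => u c (update z k s)) (z k) = deriv (fun s => u' c (update z k s)) (z k) := by
    simpa [normalizedZPartials, hybar c] using congrFun (hpartials z ybar k) (.inl c)
  intro c k z t
  refine ⟨hU c z k, congrFun (hpartials z ybar k) (.inr c), ?_⟩
  obtain ⟨z₀, k₀, hz₀⟩ := hune c
  have hr_ratio := congrFun (hpartials z₀ (update ybar c t) k₀) (.inl c)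
  simp only [normalizedZPartials, Sum.elim_inl, update_self, ← hU c z₀ k₀] at hr_ratio
  simpa [div_eq_mul_inv, hz₀] using hr_ratio

/-- Proposition 1: if two separable matching models induce the
same conditional match probabilities and satisfy the scale normalization, the
non-degeneracy conditions, and the rank condition on `Π`, then the partial
derivatives `∂u^c/∂z_k`, `∂v^c/∂z_k` and `(r^c)'` coincide across the two
models everywhere. -/
theorem stmt_0 (C dz : ℕ) (hC : 1 ≤ C) (hdz : 1 ≤ dz)
    (u v u' v' : Fin C → (Fin dz → ℝ) → ℝ)
    (r r' : Fin C → ℝ → ℝ)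
    (Λ Λ' : Fin C → ((Fin C → ℝ) × (Fin C → ℝ)) → ℝ)
    (hu : ∀ c, ContDiff ℝ 1 (u c)) (hv : ∀ c, ContDiff ℝ 1 (v c))
    (hu' : ∀ c, ContDiff ℝ 1 (u' c)) (hv' : ∀ c, ContDiff ℝ 1 (v' c))
    (hr : ∀ c, ContDiff ℝ 1 (r c)) (hr' : ∀ c, ContDiff ℝ 1 (r' c))
    (hΛ : ∀ c, ContDiff ℝ 1 (Λ c)) (hΛ' : ∀ c, ContDiff ℝ 1 (Λ' c))
    (hσeq : ∀ (c : Fin C) (z : Fin dz → ℝ) (y w : Fin C → ℝ),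
      sigmaSep C dz u v r Λ c z y w = sigmaSep C dz u' v' r' Λ' c z y w)
    -- (i) scale normalization
    (hnorm : ∃ ybar : Fin C → ℝ, ∀ c,
      deriv (r c) (ybar c) = 1 ∧ deriv (r' c) (ybar c) = 1)
    -- (ii) the derivatives of r and r' never vanish
    (hrne : ∀ (c : Fin C) (t : ℝ), deriv (r c) t ≠ 0 ∧ deriv (r' c) t ≠ 0)
    -- (iii) for every c, some partial derivative of u^c is nonzero somewhere
    (hune : ∀ c : Fin C, ∃ (z : Fin dz → ℝ) (k : Fin dz),
      deriv (fun s => u c (Function.update z k s)) (z k) ≠ 0)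
    -- (iv) rank condition on Π
    (hrank : ∀ (z : Fin dz → ℝ) (y : Fin C → ℝ), ∃ w1 w2 : Fin C → ℝ,
      IsUnit (PiMat C dz (sigmaSep C dz u v r Λ) z y w1 w2)) :
    ∀ (c : Fin C) (k : Fin dz) (z : Fin dz → ℝ) (t : ℝ),
      deriv (fun s => u c (Function.update z k s)) (z k) =
        deriv (fun s => u' c (Function.update z k s)) (z k) ∧
      deriv (fun s => v c (Function.update z k s)) (z k) =
        deriv (fun s => v' c (Function.update z k s)) (z k) ∧
      deriv (r c) t = deriv (r' c) t :=
  stmt_0_general C dz u v u' v' r r' Λ Λ' hu hv hu' hv' hr hr' hΛ hΛ' hσeq hnorm hrne hune hrank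
end

section
/- Suppose (β, γ, Λ) and (β̃, γ̃, Λ̃) are two linear-index matching models (as in the context) that induce the SAME conditional match probability functions σ_c on ℝ^{d_z}×ℝ^C×ℝ^C for every c ∈ {1,…,C}, and suppose there exist z ∈ ℝ^{d_z}, y ∈ ℝ^C, and w^1, w^2 ∈ ℝ^C such that the 2C×2C matrix Π(z,y,w^1,w^2) is invertible. Then β_c = β̃_c and γ_c = γ̃_c for every c ∈ {1,…,C}. -/
/-- The conditional match probability of college `c` induced by a linear-index
matching model `(β, γ, Λ)`:
`σ_c(z,y,w) = Λ_c(y_1+z·β_1,…,y_C+z·β_C, w_1+z·γ_1,…,w_C+z·γ_C)`. -/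
noncomputable def sigmaLin (C dz : ℕ)
    (β γ : Fin C → Fin dz → ℝ)
    (Λ : Fin C → ((Fin C → ℝ) × (Fin C → ℝ)) → ℝ)
    (c : Fin C) (z : Fin dz → ℝ) (y w : Fin C → ℝ) : ℝ :=
  Λ c (fun d => y d + ∑ k, z k * β d k, fun d => w d + ∑ k, z k * γ d k)

/-!
Since `σ_c(z,y,w) = Λ_c(y + zβ, w + zγ)`, the chain rule gives
`∂σ_c/∂z_k = ∑_d ∂σ_c/∂y_d β_{dk} + ∑_d ∂σ_c/∂w_d γ_{dk}`. Stacking this identity at `w¹` and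
`w²` gives `Π(z,y,w¹,w²) (β_{·k}, γ_{·k}) = (∂_{z_k}σ(z,y,w¹), ∂_{z_k}σ(z,y,w²))`, where `Π` and the
right-hand side depend on the model only through `σ`. Two models with the same `σ` therefore
solve the same linear system, and invertibility of `Π` forces their coefficients to coincide.
-/

open Function Matrix

theorem LinearMap.map_prodMk_eq_sum_single {R M ι : Type*} [CommSemiring R] [AddCommMonoid M]
    [Module R M] [Fintype ι] [DecidableEq ι] (L : (ι → R) × (ι → R) →ₗ[R] M) (a b : ι → R) :
    L (a, b) = ∑ i, a i • L (Pi.single i 1, 0) + ∑ i, b i • L (0, Pi.single i 1) := by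
  have hab : (a, b) = ∑ i, (a i • (Pi.single i 1, 0) + b i • (0, Pi.single i 1)) := by
    ext j <;> simp [Prod.fst_sum, Prod.snd_sum, Pi.single_apply]
  rw [hab, map_sum]
  simp only [map_add, map_smul, Finset.sum_add_distrib]

theorem hasDerivAt_sum_update_mul {𝕜 ι : Type*} [NontriviallyNormedField 𝕜] [Fintype ι]
    [DecidableEq ι] (z v : ι → 𝕜) (k : ι) (t : 𝕜) :
    HasDerivAt (fun s => ∑ j, update z k s j * v j) (v k) t := by
  have h := HasDerivAt.fun_sum (u := Finset.univ) fun j _ =>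
    (hasDerivAt_pi.1 (hasDerivAt_update z k t) j).mul_const (v j)
  simpa [Pi.single_apply] using h

section LinearIndex

variable {C dz : ℕ} (β γ : Fin C → Fin dz → ℝ)

def linIndex (z : Fin dz → ℝ) (y w : Fin C → ℝ) : (Fin C → ℝ) × (Fin C → ℝ) :=
  (fun d => y d + ∑ k, z k * β d k, fun d => w d + ∑ k, z k * γ d k)

variable (z : Fin dz → ℝ) (y w : Fin C → ℝ) (t : ℝ)

theorem hasDerivAt_linIndex_update_y (d : Fin C) :
    HasDerivAt (fun s => linIndex β γ z (update y d s) w) (Pi.single d 1, 0) t := by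
  refine HasDerivAt.prodMk ?_ (hasDerivAt_const t _)
  exact hasDerivAt_pi.2 fun e => (hasDerivAt_pi.1 (hasDerivAt_update y d t) e).add_const _

theorem hasDerivAt_linIndex_update_w (d : Fin C) :
    HasDerivAt (fun s => linIndex β γ z y (update w d s)) (0, Pi.single d 1) t := by
  refine HasDerivAt.prodMk (hasDerivAt_const t _) ?_
  exact hasDerivAt_pi.2 fun e => (hasDerivAt_pi.1 (hasDerivAt_update w d t) e).add_const _

theorem hasDerivAt_linIndex_update_z (k : Fin dz) :
    HasDerivAt (fun s => linIndex β γ (update z k s) y w) (fun d => β d k, fun d => γ d k) t :=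
  .prodMk (hasDerivAt_pi.2 fun d => (hasDerivAt_sum_update_mul z (β d) k t).const_add (y d))
    (hasDerivAt_pi.2 fun d => (hasDerivAt_sum_update_mul z (γ d) k t).const_add (w d))

variable (Λ : Fin C → ((Fin C → ℝ) × (Fin C → ℝ)) → ℝ)

theorem sigmaLin_eq_linIndex (c : Fin C) :
    sigmaLin C dz β γ Λ c z y w = Λ c (linIndex β γ z y w) := rfl

theorem deriv_sigmaLin_update_z (c : Fin C) (hΛ : Differentiable ℝ (Λ c)) (k : Fin dz) :
    deriv (fun s => sigmaLin C dz β γ Λ c (update z k s) y w) (z k) =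
      ∑ d, deriv (fun s => sigmaLin C dz β γ Λ c z (update y d s) w) (y d) * β d k +
      ∑ d, deriv (fun s => sigmaLin C dz β γ Λ c z y (update w d s)) (w d) * γ d k := by
  set L := fderiv ℝ (Λ c) (linIndex β γ z y w)
  have chain {g : ℝ → (Fin C → ℝ) × (Fin C → ℝ)} {v t} (hgt : g t = linIndex β γ z y w)
      (hg : HasDerivAt g v t) : deriv (fun s => Λ c (g s)) t = L v := by
    have h := ((hΛ (g t)).hasFDerivAt.comp_hasDerivAt t hg).deriv
    rwa [hgt] at h
  have hz : deriv (fun s => Λ c (linIndex β γ (update z k s) y w)) (z k) =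
      L (fun d => β d k, fun d => γ d k) :=
    chain (by simp) (hasDerivAt_linIndex_update_z β γ z y w _ k)
  have hy (d : Fin C) : deriv (fun s => Λ c (linIndex β γ z (update y d s) w)) (y d) =
      L (Pi.single d 1, 0) :=
    chain (by simp) (hasDerivAt_linIndex_update_y β γ z y w _ d)
  have hw (d : Fin C) : deriv (fun s => Λ c (linIndex β γ z y (update w d s))) (w d) =
      L (0, Pi.single d 1) :=
    chain (by simp) (hasDerivAt_linIndex_update_w β γ z y w _ d)
  simp only [sigmaLin_eq_linIndex, hz, hy, hw]
  simpa [mul_comm] using L.toLinearMap.map_prodMk_eq_sum_single (fun d => β d k) (fun d => γ d k)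

theorem piMat_mulVec_eq_deriv_update_z (hΛ : ∀ c, Differentiable ℝ (Λ c)) (w₁ w₂ : Fin C → ℝ)
    (k : Fin dz) :
    PiMat C dz (sigmaLin C dz β γ Λ) z y w₁ w₂ *ᵥ Sum.elim (fun d => β d k) (fun d => γ d k) =
      Sum.elim (fun c => deriv (fun s => sigmaLin C dz β γ Λ c (update z k s) y w₁) (z k))
        (fun c => deriv (fun s => sigmaLin C dz β γ Λ c (update z k s) y w₂) (z k)) := by
  funext i
  rcases i with c | c <;>
    simp [Matrix.mulVec, dotProduct, PiMat, deriv_sigmaLin_update_z β γ z y _ Λ c (hΛ c)]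

end LinearIndex

theorem stmt_4_general (C dz : ℕ)
    (β γ β' γ' : Fin C → Fin dz → ℝ)
    (Λ Λ' : Fin C → ((Fin C → ℝ) × (Fin C → ℝ)) → ℝ)
    (hΛ : ∀ c, ContDiff ℝ 1 (Λ c)) (hΛ' : ∀ c, ContDiff ℝ 1 (Λ' c))
    (hσeq : ∀ (c : Fin C) (z : Fin dz → ℝ) (y w : Fin C → ℝ),
      sigmaLin C dz β γ Λ c z y w = sigmaLin C dz β' γ' Λ' c z y w)
    (hrank : ∃ (z : Fin dz → ℝ) (y w1 w2 : Fin C → ℝ),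
      IsUnit (PiMat C dz (sigmaLin C dz β γ Λ) z y w1 w2)) :
    ∀ c : Fin C, β c = β' c ∧ γ c = γ' c := by
  obtain ⟨z, y, w₁, w₂, hunit⟩ := hrank
  have hσ : sigmaLin C dz β' γ' Λ' = sigmaLin C dz β γ Λ := by
    funext c z y w
    exact (hσeq c z y w).symm
  have hdiff : ∀ c, Differentiable ℝ (Λ c) := fun c => (hΛ c).differentiable one_ne_zero
  have hdiff' : ∀ c, Differentiable ℝ (Λ' c) := fun c => (hΛ' c).differentiable one_ne_zero
  have hcoef (k : Fin dz) : Sum.elim (fun d => β d k) (fun d => γ d k) =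
      Sum.elim (fun d => β' d k) (fun d => γ' d k) := by
    apply Matrix.mulVec_injective_iff_isUnit.2 hunit
    have h' := piMat_mulVec_eq_deriv_update_z β' γ' z y Λ' hdiff' w₁ w₂ k
    rw [hσ] at h'
    rw [h', piMat_mulVec_eq_deriv_update_z β γ z y Λ hdiff]
  exact fun c => ⟨funext fun k => congrFun (hcoef k) (.inl c),
    funext fun k => congrFun (hcoef k) (.inr c)⟩

/-- Proposition 3, continuous covariates: if two linear-index
matching models induce the same conditional match probabilities and the matrix
`Π(z,y,w¹,w²)` is invertible at some point, then the coefficient vectors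
coincide: `β_c = β̃_c` and `γ_c = γ̃_c` for every `c`. -/
theorem stmt_4 (C dz : ℕ) (hC : 1 ≤ C) (hdz : 1 ≤ dz)
    (β γ β' γ' : Fin C → Fin dz → ℝ)
    (Λ Λ' : Fin C → ((Fin C → ℝ) × (Fin C → ℝ)) → ℝ)
    (hΛ : ∀ c, ContDiff ℝ 1 (Λ c)) (hΛ' : ∀ c, ContDiff ℝ 1 (Λ' c))
    (hσeq : ∀ (c : Fin C) (z : Fin dz → ℝ) (y w : Fin C → ℝ),
      sigmaLin C dz β γ Λ c z y w = sigmaLin C dz β' γ' Λ' c z y w)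
    (hrank : ∃ (z : Fin dz → ℝ) (y w1 w2 : Fin C → ℝ),
      IsUnit (PiMat C dz (sigmaLin C dz β γ Λ) z y w1 w2)) :
    ∀ c : Fin C, β c = β' c ∧ γ c = γ' c :=
  stmt_4_general C dz β γ β' γ' Λ Λ' hΛ hΛ' hσeq hrank
end

section
/- Fix integers C ≥ 1 and d_z ≥ 1. For c ∈ {1,…,C} let Ψ_c, Ψ̃_c : ℝ² → ℝ be continuously differentiable, and let β, γ, β̃, γ̃ ∈ ℝ^{d_z}. Define σ_c(z,y,w) = Ψ_c(y + z·β, w + z·γ) and σ̃_c(z,y,w) = Ψ̃_c(y + z·β̃, w + z·γ̃) for (z,y,w) ∈ ℝ^{d_z}×ℝ×ℝ. Suppose σ_c = σ̃_c as functions for every c, and suppose there exists a point (z,y,w) at which the C×2 matrix whose c-th row is (∂σ_c/∂y(z,y,w), ∂σ_c/∂w(z,y,w)) has rank 2. Then β = β̃ and γ = γ̃. -/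
/-!
Both models write each `σ_c`, as a function of `x = (z, y, w)`, as `Ψ_c ∘ I` with the linear
index map `I x = (y + z·β, w + z·γ)`, so the chain rule gives `DΨ_c ∘ I = DΨ̃_c ∘ Ĩ` at the
rank point. Both index maps are the identity on the `(y, w)` directions, hence
`L_c := DΨ_c = DΨ̃_c`, and then every `L_c` vanishes on `I - Ĩ`, whose value at the `k`-th
covariate direction is `(β_k - β̃_k, γ_k - γ̃_k)`. The rank condition says exactly that the
stacked map `(L_c)_c` is injective.
-/

open Matrix in
theorem Matrix.mulVec_injective_of_rank_eq_card {m n K : Type*} [Fintype n] [Field K]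
    {M : Matrix m n K} (h : M.rank = Fintype.card n) : Function.Injective M.mulVec :=
  mulVec_injective_iff.mpr <| linearIndependent_iff_card_eq_finrank_span.mpr <| by
    rw [← h, rank_eq_finrank_span_cols]; rfl

section PartialDerivatives

variable {E G : Type*} [NormedAddCommGroup E] [NormedSpace ℝ E] [NormedAddCommGroup G]
  [NormedSpace ℝ G] {f : E × ℝ × ℝ → G} {f' : E × ℝ × ℝ →L[ℝ] G} {z : E} {y w : ℝ}

theorem HasFDerivAt.hasDerivAt_comp_mk_snd_fst (hf : HasFDerivAt f f' (z, y, w)) :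
    HasDerivAt (fun t => f (z, t, w)) (f' (0, 1, 0)) y :=
  hf.comp_hasDerivAt y
    ((hasDerivAt_const y z).prodMk ((hasDerivAt_id y).prodMk (hasDerivAt_const y w)))

theorem HasFDerivAt.hasDerivAt_comp_mk_snd_snd (hf : HasFDerivAt f f' (z, y, w)) :
    HasDerivAt (fun t => f (z, y, t)) (f' (0, 0, 1)) w :=
  hf.comp_hasDerivAt w
    ((hasDerivAt_const w z).prodMk ((hasDerivAt_const w y).prodMk (hasDerivAt_id w)))

end PartialDerivatives

section UtilityIndex

variable {ι : Type*} [Fintype ι]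

noncomputable def utilityIndex (β γ : ι → ℝ) : (ι → ℝ) × ℝ × ℝ →L[ℝ] ℝ × ℝ :=
  LinearMap.toContinuousLinearMap
    { toFun := fun x => (x.2.1 + ∑ k, x.1 k * β k, x.2.2 + ∑ k, x.1 k * γ k)
      map_add' := fun x x' => by
        simp only [Prod.fst_add, Prod.snd_add, Pi.add_apply, add_mul, Finset.sum_add_distrib,
          Prod.mk_add_mk]
        ring_nf
      map_smul' := fun a x => by
        simp only [Prod.smul_fst, Prod.smul_snd, Pi.smul_apply, smul_eq_mul, mul_assoc,
          ← Finset.mul_sum, RingHom.id_apply, Prod.smul_mk, mul_add] }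

@[simp]
theorem utilityIndex_apply (β γ : ι → ℝ) (x : (ι → ℝ) × ℝ × ℝ) :
    utilityIndex β γ x = (x.2.1 + ∑ k, x.1 k * β k, x.2.2 + ∑ k, x.1 k * γ k) :=
  rfl

theorem hasFDerivAt_of_eq_comp_utilityIndex {β γ : ι → ℝ} {Ψ : ℝ × ℝ → ℝ}
    (hΨ : Differentiable ℝ Ψ) {σ : (ι → ℝ) → ℝ → ℝ → ℝ}
    (hσ : ∀ z y w, σ z y w = Ψ (y + ∑ k, z k * β k, w + ∑ k, z k * γ k))
    (x : (ι → ℝ) × ℝ × ℝ) :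
    HasFDerivAt (fun x => σ x.1 x.2.1 x.2.2)
      (fderiv ℝ Ψ (utilityIndex β γ x) ∘L utilityIndex β γ) x := by
  have hσΨ : (fun x : (ι → ℝ) × ℝ × ℝ => σ x.1 x.2.1 x.2.2) = Ψ ∘ utilityIndex β γ :=
    funext fun x => hσ x.1 x.2.1 x.2.2
  rw [hσΨ]
  exact (hΨ _).hasFDerivAt.comp x (utilityIndex β γ).hasFDerivAt

variable {F : Type*} [AddCommGroup F] [Module ℝ F] [TopologicalSpace F]
  {β γ β' γ' : ι → ℝ} {L L' : ℝ × ℝ →L[ℝ] F}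

theorem eq_of_comp_utilityIndex_eq (h : L ∘L utilityIndex β γ = L' ∘L utilityIndex β' γ') :
    L = L' :=
  ContinuousLinearMap.ext fun p => by simpa using congr($h (0, p.1, p.2))

theorem apply_sub_eq_zero_of_comp_utilityIndex_eq
    (h : L ∘L utilityIndex β γ = L' ∘L utilityIndex β' γ') (k : ι) :
    L (β k - β' k, γ k - γ' k) = 0 := by
  classical
  have hk := congr($h (Pi.single k 1, 0, 0))
  simp only [ContinuousLinearMap.comp_apply, utilityIndex_apply, Pi.single_apply, ite_mul,
    one_mul, zero_mul, Finset.sum_ite_eq', Finset.mem_univ, if_true, zero_add,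
    ← eq_of_comp_utilityIndex_eq h] at hk
  rw [← Prod.mk_sub_mk, map_sub, hk, sub_self]

end UtilityIndex

def partialsMatrix {m : Type*} (L : m → ℝ × ℝ →L[ℝ] ℝ) : Matrix m (Fin 2) ℝ :=
  Matrix.of fun c j => if j = 0 then L c (1, 0) else L c (0, 1)

open Matrix in
theorem partialsMatrix_mulVec {m : Type*} (L : m → ℝ × ℝ →L[ℝ] ℝ) (a b : ℝ) :
    partialsMatrix L *ᵥ ![a, b] = fun c => L c (a, b) := by
  ext c
  have hab : ((a, b) : ℝ × ℝ) = a • (1, 0) + b • (0, 1) := by simp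
  rw [hab, map_add, map_smul, map_smul]
  simp [partialsMatrix, mulVec, dotProduct, Fin.sum_univ_two, mul_comm]

theorem stmt_5_general (C dz : ℕ)
    (Ψ Ψ' : Fin C → (ℝ × ℝ) → ℝ)
    (hΨ : ∀ c, ContDiff ℝ 1 (Ψ c)) (hΨ' : ∀ c, ContDiff ℝ 1 (Ψ' c))
    (β γ β' γ' : Fin dz → ℝ)
    (σ σ' : Fin C → (Fin dz → ℝ) → ℝ → ℝ → ℝ)
    (hσ : ∀ (c : Fin C) (z : Fin dz → ℝ) (y w : ℝ),
      σ c z y w = Ψ c (y + ∑ k, z k * β k, w + ∑ k, z k * γ k))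
    (hσ' : ∀ (c : Fin C) (z : Fin dz → ℝ) (y w : ℝ),
      σ' c z y w = Ψ' c (y + ∑ k, z k * β' k, w + ∑ k, z k * γ' k))
    (heq : ∀ (c : Fin C) (z : Fin dz → ℝ) (y w : ℝ), σ c z y w = σ' c z y w)
    (hrank : ∃ (z : Fin dz → ℝ) (y w : ℝ),
      (Matrix.of fun (c : Fin C) (j : Fin 2) =>
        if j = 0 then deriv (fun t => σ c z t w) y
        else deriv (fun t => σ c z y t) w).rank = 2) :
    β = β' ∧ γ = γ' := by
  obtain ⟨z, y, w, hrank⟩ := hrank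
  have hD c := hasFDerivAt_of_eq_comp_utilityIndex ((hΨ c).differentiable one_ne_zero) (hσ c)
    (z, y, w)
  have hD' c := hasFDerivAt_of_eq_comp_utilityIndex ((hΨ' c).differentiable one_ne_zero)
    (fun z y w => (heq c z y w).trans (hσ' c z y w)) (z, y, w)
  have hM : (Matrix.of fun (c : Fin C) (j : Fin 2) =>
        if j = 0 then deriv (fun t => σ c z t w) y
        else deriv (fun t => σ c z y t) w) =
      partialsMatrix fun c => fderiv ℝ (Ψ c) (utilityIndex β γ (z, y, w)) := by
    ext c j
    fin_cases j
    · simp [partialsMatrix, (hD c).hasDerivAt_comp_mk_snd_fst.deriv]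
    · simp [partialsMatrix, (hD c).hasDerivAt_comp_mk_snd_snd.deriv]
  have hinj := Matrix.mulVec_injective_of_rank_eq_card (hrank.trans (Fintype.card_fin 2).symm)
  rw [hM] at hinj
  have hcoef k : ![β k - β' k, γ k - γ' k] = 0 := hinj <| by
    rw [partialsMatrix_mulVec, Matrix.mulVec_zero]
    exact funext fun c => apply_sub_eq_zero_of_comp_utilityIndex_eq ((hD c).unique (hD' c)) k
  exact ⟨funext fun k => sub_eq_zero.mp congr($(hcoef k) 0),
    funext fun k => sub_eq_zero.mp congr($(hcoef k) 1)⟩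

/-- Proposition 5, fully homogeneous case: in the
homogeneous-coefficient matching model with
`σ_c(z,y,w) = Ψ_c(y + z·β, w + z·γ)`, if two such models induce the same
conditional match probabilities and at some point the `C × 2` matrix of
derivatives `(∂σ_c/∂y, ∂σ_c/∂w)` has rank `2`, then `β = β̃` and `γ = γ̃`. -/
theorem stmt_5 (C dz : ℕ) (hC : 1 ≤ C) (hdz : 1 ≤ dz)
    (Ψ Ψ' : Fin C → (ℝ × ℝ) → ℝ)
    (hΨ : ∀ c, ContDiff ℝ 1 (Ψ c)) (hΨ' : ∀ c, ContDiff ℝ 1 (Ψ' c))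
    (β γ β' γ' : Fin dz → ℝ)
    (σ σ' : Fin C → (Fin dz → ℝ) → ℝ → ℝ → ℝ)
    (hσ : ∀ (c : Fin C) (z : Fin dz → ℝ) (y w : ℝ),
      σ c z y w = Ψ c (y + ∑ k, z k * β k, w + ∑ k, z k * γ k))
    (hσ' : ∀ (c : Fin C) (z : Fin dz → ℝ) (y w : ℝ),
      σ' c z y w = Ψ' c (y + ∑ k, z k * β' k, w + ∑ k, z k * γ' k))
    (heq : ∀ (c : Fin C) (z : Fin dz → ℝ) (y w : ℝ), σ c z y w = σ' c z y w)
    (hrank : ∃ (z : Fin dz → ℝ) (y w : ℝ),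
      (Matrix.of fun (c : Fin C) (j : Fin 2) =>
        if j = 0 then deriv (fun t => σ c z t w) y
        else deriv (fun t => σ c z y t) w).rank = 2) :
    β = β' ∧ γ = γ' :=
  stmt_5_general C dz Ψ Ψ' hΨ hΨ' β γ β' γ' σ σ' hσ hσ' heq hrank
end

section
/- Let μ and ν be Borel probability measures on ℝ⁴ such that Λ₀^μ(τ_1,τ_2,ι_1,ι_2) = Λ₀^ν(τ_1,τ_2,ι_1,ι_2) for every (τ_1,τ_2,ι_1,ι_2) ∈ ℝ⁴. Then for all a_1, a_2, b_1, b_2 ∈ ℝ, μ{(ε_1,ε_2,η_1,η_2) ∈ ℝ⁴ : ε_1 < a_1, ε_2 < a_2, η_1 < b_1, η_2 < b_2} = ν{(ε_1,ε_2,η_1,η_2) ∈ ℝ⁴ : ε_1 < a_1, ε_2 < a_2, η_1 < b_1, η_2 < b_2}; consequently μ = ν. -/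
/-!
Write `P₁ = {ε₁ < a₁}`, `Q₁ = {η₁ < b₁}`, `P₂ = {ε₂ < a₂}`, `Q₂ = {η₂ < b₂}`, so that `Λ₀`
determines the mass of `(P₁ ∪ Q₁) ∩ (P₂ ∪ Q₂)`. Sending `b₁ → -∞` shrinks `Q₁` to `∅` and,
by continuity from above, recovers the mass of `P₁ ∩ (P₂ ∪ Q₂)`; symmetrically that of
`Q₁ ∩ (P₂ ∪ Q₂)`, and inclusion–exclusion then gives `P₁ ∩ Q₁ ∩ (P₂ ∪ Q₂)`. Repeating the
argument in the second factor yields the mass of every open lower orthant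
`P₁ ∩ Q₁ ∩ P₂ ∩ Q₂`, and these orthants form a generating π-system.
-/

open MeasureTheory

/-- For a Borel probability measure `μ` on `ℝ⁴` (coordinates
`(ε_1, ε_2, η_1, η_2) = (x 0, x 1, x 2, x 3)`), the conditional probability of
being unmatched in the two-college model with student indices `(τ_1,τ_2)`,
college indices `(ι_1,ι_2)`, and both cutoffs normalized to zero:
`Λ₀^μ(τ_1,τ_2,ι_1,ι_2) = μ{(ε_1 < −τ_1 ∨ η_1 < −ι_1) ∧ (ε_2 < −τ_2 ∨ η_2 < −ι_2)}`. -/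
noncomputable def Lam0 (μ : Measure (Fin 4 → ℝ)) (τ1 τ2 ι1 ι2 : ℝ) : ℝ :=
  (μ {x : Fin 4 → ℝ | (x 0 < -τ1 ∨ x 2 < -ι1) ∧ (x 1 < -τ2 ∨ x 3 < -ι2)}).toReal

open Set Filter

section AgreementOfMeasures

variable {α ι : Type*} [MeasurableSpace α] {μ ν : Measure α}

theorem measure_inter_eq_of_measure_union_eq [IsFiniteMeasure ν] {s t : Set α}
    (ht : MeasurableSet t) (hs_eq : μ s = ν s) (ht_eq : μ t = ν t)
    (hst_eq : μ (s ∪ t) = ν (s ∪ t)) : μ (s ∩ t) = ν (s ∩ t) := by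
  have hμ := measure_union_add_inter (μ := μ) s ht
  rw [hst_eq, hs_eq, ht_eq, ← measure_union_add_inter (μ := ν) s ht] at hμ
  exact (ENNReal.add_right_inj (measure_ne_top ν _)).1 hμ

variable [Preorder ι] [IsCountablyGenerated (atBot : Filter ι)] [(atBot : Filter ι).NeBot]

theorem measure_iInter_eq_of_monotone [IsFiniteMeasure μ] [IsFiniteMeasure ν]
    {s : ι → Set α} (hs : ∀ i, MeasurableSet (s i)) (hmono : Monotone s)
    (h : ∀ i, μ (s i) = ν (s i)) : μ (⋂ i, s i) = ν (⋂ i, s i) := by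
  have := nonempty_of_neBot (atBot : Filter ι)
  have hμ := tendsto_measure_iInter_atBot (μ := μ) (fun i => (hs i).nullMeasurableSet) hmono
    ⟨Classical.arbitrary ι, measure_ne_top μ _⟩
  have hν := tendsto_measure_iInter_atBot (μ := ν) (fun i => (hs i).nullMeasurableSet) hmono
    ⟨Classical.arbitrary ι, measure_ne_top ν _⟩
  rw [show μ ∘ s = ν ∘ s from funext h] at hμ
  exact tendsto_nhds_unique hμ hν

structure ShrinksToEmpty (s : ι → Set α) : Prop where
  measurableSet : ∀ a, MeasurableSet (s a)
  monotone : Monotone s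
  iInter_eq_empty : ⋂ a, s a = ∅

theorem ShrinksToEmpty.measure_inter_eq [IsFiniteMeasure μ] [IsFiniteMeasure ν]
    {s : ι → Set α} (hs : ShrinksToEmpty s) {t u : Set α} (ht : MeasurableSet t)
    (hu : MeasurableSet u) (h : ∀ a, μ ((t ∪ s a) ∩ u) = ν ((t ∪ s a) ∩ u)) :
    μ (t ∩ u) = ν (t ∩ u) := by
  have := nonempty_of_neBot (atBot : Filter ι)
  have hlim : ⋂ a, (t ∪ s a) ∩ u = t ∩ u := by
    rw [← iInter_inter, ← union_iInter, hs.iInter_eq_empty, union_empty]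
  rw [← hlim]
  exact measure_iInter_eq_of_monotone (fun a => (ht.union (hs.measurableSet a)).inter hu)
    (fun a a' haa' => inter_subset_inter_left u (union_subset_union_right t (hs.monotone haa')))
    h

theorem measure_inter_inter_eq_of_forall_union_inter [IsFiniteMeasure μ] [IsFiniteMeasure ν]
    {s t : ι → Set α} (hs : ShrinksToEmpty s) (ht : ShrinksToEmpty t) {u : Set α}
    (hu : MeasurableSet u) (h : ∀ a b, μ ((s a ∪ t b) ∩ u) = ν ((s a ∪ t b) ∩ u)) (a b : ι) :
    μ (s a ∩ t b ∩ u) = ν (s a ∩ t b ∩ u) := by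
  have hs_eq : μ (s a ∩ u) = ν (s a ∩ u) := ht.measure_inter_eq (hs.measurableSet a) hu (h a)
  have ht_eq : μ (t b ∩ u) = ν (t b ∩ u) :=
    hs.measure_inter_eq (ht.measurableSet b) hu fun a => by rw [union_comm]; exact h a b
  rw [inter_inter_distrib_right]
  exact measure_inter_eq_of_measure_union_eq ((ht.measurableSet b).inter hu) hs_eq ht_eq
    (by rw [← union_inter_distrib_right]; exact h a b)

theorem measure_inter_inter_eq_of_forall_union_inter_union [IsFiniteMeasure μ]
    [IsFiniteMeasure ν] {s₁ t₁ s₂ t₂ : ι → Set α} (hs₁ : ShrinksToEmpty s₁)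
    (ht₁ : ShrinksToEmpty t₁) (hs₂ : ShrinksToEmpty s₂) (ht₂ : ShrinksToEmpty t₂)
    (h : ∀ a b c d, μ ((s₁ a ∪ t₁ b) ∩ (s₂ c ∪ t₂ d)) = ν ((s₁ a ∪ t₁ b) ∩ (s₂ c ∪ t₂ d)))
    (a b c d : ι) : μ (s₂ c ∩ t₂ d ∩ (s₁ a ∩ t₁ b)) = ν (s₂ c ∩ t₂ d ∩ (s₁ a ∩ t₁ b)) := by
  refine measure_inter_inter_eq_of_forall_union_inter hs₂ ht₂
    ((hs₁.measurableSet a).inter (ht₁.measurableSet b)) (fun c d => ?_) c d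
  rw [inter_comm]
  exact measure_inter_inter_eq_of_forall_union_inter hs₁ ht₁
    ((hs₂.measurableSet c).union (ht₂.measurableSet d)) (h · · c d) a b

end AgreementOfMeasures

theorem MeasureTheory.Measure.ext_of_pi_Iio {ι : Type*} [Finite ι] {μ ν : Measure (ι → ℝ)}
    [IsFiniteMeasure μ]
    (h : ∀ a : ι → ℝ, μ (univ.pi fun i => Iio (a i)) = ν (univ.pi fun i => Iio (a i))) :
    μ = ν := by
  have hgen : MeasurableSpace.pi =
      MeasurableSpace.generateFrom (univ.pi '' univ.pi fun _ : ι => range (Iio : ℝ → Set ℝ)) :=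
    (generateFrom_eq_pi (fun _ => (borel_eq_generateFrom_Iio ℝ).symm) fun _ =>
      ⟨fun n : ℕ => Iio (n : ℝ), fun _ => mem_range_self _,
        iUnion_eq_univ_iff.2 fun x => exists_nat_gt x⟩).symm
  refine Measure.ext_of_generateFrom_of_iUnion _ (fun n : ℕ => univ.pi fun _ => Iio (n : ℝ)) hgen
    (IsPiSystem.pi fun _ => isPiSystem_Iio) ?_ (fun n => mem_image_of_mem _ fun _ _ =>
      mem_range_self _) (fun _ => measure_ne_top μ _) ?_
  · refine iUnion_eq_univ_iff.2 fun x => ?_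
    obtain ⟨c, hc⟩ := Finite.bddAbove_range x
    obtain ⟨n, hn⟩ := exists_nat_gt c
    exact ⟨n, fun i _ => (hc ⟨i, rfl⟩).trans_lt hn⟩
  · rintro _ ⟨t, ht, rfl⟩
    choose a ha using fun i => ht i (mem_univ i)
    obtain rfl : (fun i => Iio (a i)) = t := funext ha
    exact h a

def lowerHalfSpace {ι : Type*} (i : ι) (a : ℝ) : Set (ι → ℝ) := {x | x i < a}

theorem shrinksToEmpty_lowerHalfSpace {ι : Type*} (i : ι) :
    ShrinksToEmpty (lowerHalfSpace i) where
  measurableSet _ := measurableSet_lt (measurable_pi_apply i) measurable_const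
  monotone _ _ hab _ hx := lt_of_lt_of_le hx hab
  iInter_eq_empty := eq_empty_of_forall_notMem fun x hx => lt_irrefl (x i) (mem_iInter.1 hx (x i))

/-- Proposition 2, `C = 2`: if two Borel probability measures on
`ℝ⁴` induce the same unmatched probability `Λ₀` everywhere, then they assign
the same mass to all open lower orthants, and consequently they are equal. -/
theorem stmt_7 (μ ν : Measure (Fin 4 → ℝ))
    [IsProbabilityMeasure μ] [IsProbabilityMeasure ν]
    (h : ∀ τ1 τ2 ι1 ι2 : ℝ, Lam0 μ τ1 τ2 ι1 ι2 = Lam0 ν τ1 τ2 ι1 ι2) :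
    (∀ a1 a2 b1 b2 : ℝ,
      μ {x : Fin 4 → ℝ | x 0 < a1 ∧ x 1 < a2 ∧ x 2 < b1 ∧ x 3 < b2} =
        ν {x : Fin 4 → ℝ | x 0 < a1 ∧ x 1 < a2 ∧ x 2 < b1 ∧ x 3 < b2}) ∧
    μ = ν := by
  set H := @lowerHalfSpace (Fin 4)
  have unmatched : ∀ a1 b1 a2 b2, μ ((H 0 a1 ∪ H 2 b1) ∩ (H 1 a2 ∪ H 3 b2)) =
      ν ((H 0 a1 ∪ H 2 b1) ∩ (H 1 a2 ∪ H 3 b2)) := fun a1 b1 a2 b2 => by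
    have hΛ := h (-a1) (-a2) (-b1) (-b2)
    simp only [Lam0, neg_neg] at hΛ
    exact (ENNReal.toReal_eq_toReal_iff' (measure_ne_top μ _) (measure_ne_top ν _)).1 hΛ
  have box : ∀ a1 a2 b1 b2 : ℝ,
      μ {x : Fin 4 → ℝ | x 0 < a1 ∧ x 1 < a2 ∧ x 2 < b1 ∧ x 3 < b2} =
        ν {x : Fin 4 → ℝ | x 0 < a1 ∧ x 1 < a2 ∧ x 2 < b1 ∧ x 3 < b2} := fun a1 a2 b1 b2 => by
    have hset : {x : Fin 4 → ℝ | x 0 < a1 ∧ x 1 < a2 ∧ x 2 < b1 ∧ x 3 < b2} =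
        H 1 a2 ∩ H 3 b2 ∩ (H 0 a1 ∩ H 2 b1) := by
      ext x
      simp only [H, lowerHalfSpace, mem_inter_iff, mem_ofPred_eq]
      tauto
    rw [hset]
    exact measure_inter_inter_eq_of_forall_union_inter_union (shrinksToEmpty_lowerHalfSpace 0)
      (shrinksToEmpty_lowerHalfSpace 2) (shrinksToEmpty_lowerHalfSpace 1)
      (shrinksToEmpty_lowerHalfSpace 3) unmatched a1 b1 a2 b2
  refine ⟨box, Measure.ext_of_pi_Iio fun a => ?_⟩
  have hset : univ.pi (fun i => Iio (a i)) =
      {x : Fin 4 → ℝ | x 0 < a 0 ∧ x 1 < a 1 ∧ x 2 < a 2 ∧ x 3 < a 3} := by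
    ext x
    simp [Fin.forall_fin_succ]
  rw [hset]
  exact box _ _ _ _
end

section
/- Suppose (Λ₀, ũ, ṽ) and (Λ̄₀, ū, v̄) are two nonseparable matching models in inverse form (as in the context) that induce the SAME function σ₀ on ℝ^{d_z}×ℝ^C×ℝ^C×ℝ, and that ∂ũ^c/∂y_c and ∂ū^c/∂y_c never vanish for c ∈ {2,…,C}, and ∂ṽ^c/∂w_c and ∂v̄^c/∂w_c never vanish for c ∈ {1,…,C}. Fix z ∈ ℝ^{d_z}, w ∈ ℝ^C, y_2,…,y_C ∈ ℝ, and a ∈ ℝ. Assume: (i) there exist C values y_1^1,…,y_1^C ∈ ℝ such that the C×C matrix whose m-th row is the gradient of σ₀ with respect to (y_1,…,y_C) evaluated at (z,(y_1^m,y_2,…,y_C),w,a) is invertible; (ii) there exist 2C values ŷ_1^1,…,ŷ_1^{2C} ∈ ℝ such that the 2C×2C matrix whose m-th row is the gradient of σ₀ with respect to (y_1,…,y_C,w_1,…,w_C) evaluated at (z,(ŷ_1^m,y_2,…,y_C),w,a) is invertible. Then: (∂ũ^1/∂a)(z,a) = (∂ū^1/∂a)(z,a); for every c ∈ {2,…,C},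 (∂ũ^c/∂y_c)^{-1}(∂ũ^c/∂a) = (∂ū^c/∂y_c)^{-1}(∂ū^c/∂a) at (z,y_c,a); and for every k ∈ {1,…,d_z}: (∂ũ^1/∂z_k)(z,a) = (∂ū^1/∂z_k)(z,a), (∂ũ^c/∂y_c)^{-1}(∂ũ^c/∂z_k) = (∂ū^c/∂y_c)^{-1}(∂ū^c/∂z_k) at (z,y_c,a) for every c ∈ {2,…,C}, and (∂ṽ^c/∂w_c)^{-1}(∂ṽ^c/∂z_k) = (∂v̄^c/∂w_c)^{-1}(∂v̄^c/∂z_k) at (z,w_c) for every c ∈ {1,…,C}. -/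
/-- The conditional probability of being unmatched in the nonseparable matching
model in inverse form:
`σ₀(z,y,w,a) = Λ₀(ũ¹(z,a) − y_1, ũ²(z,y_2,a), …, ũ^C(z,y_C,a), ṽ¹(z,w_1), …, ṽ^C(z,w_C))`.
College `1` is the index `0 : Fin C`; `ut1` is `ũ¹`, `ut c` is `ũ^c` for
`c ≠ 0`, and `vt c` is `ṽ^c`. -/
noncomputable def sigma0NS (C dz : ℕ) [NeZero C]
    (Λ : ((Fin C → ℝ) × (Fin C → ℝ)) → ℝ)
    (ut1 : (Fin dz → ℝ) → ℝ → ℝ)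
    (ut : Fin C → (Fin dz → ℝ) → ℝ → ℝ → ℝ)
    (vt : Fin C → (Fin dz → ℝ) → ℝ → ℝ)
    (z : Fin dz → ℝ) (y w : Fin C → ℝ) (a : ℝ) : ℝ :=
  Λ (fun c => if c = 0 then ut1 z a - y 0 else ut c z (y c) a,
     fun c => vt c z (w c))

/-!
Differentiating `σ₀` along a curve `t ↦ (ζ t, y, w, α t)` in the `(z, a)` variables gives, by the
chain rule through `Λ₀`, a linear combination of the partial derivatives `∂σ₀/∂y_c` and
`∂σ₀/∂w_c` whose coefficients are ratios of partial derivatives of `ũ` and `ṽ` not involving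
`y₁`. Evaluating at the `2C` values `ŷ₁^m` of (ii) gives a linear system for these coefficients
whose invertible matrix and right-hand side are both determined by `σ₀` alone, so the two models
have the same coefficients. The curves `t ↦ (z, t)` and `t ↦ (update z k t, a)` give the claims.
-/

open Function (update)

theorem LinearMap.map_prod_mul_eq_sum {R M ι : Type*} [CommSemiring R] [AddCommMonoid M]
    [Module R M] [Fintype ι] [DecidableEq ι] (L : (ι → R) × (ι → R) →ₗ[R] M)
    (e f x x' : ι → R) :
    L (e * x, f * x') =
      ∑ i, x i • L (Pi.single i (e i), 0) + ∑ i, x' i • L (0, Pi.single i (f i)) := by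
  have hsplit : (e * x, f * x') =
      ∑ i, x i • (Pi.single i (e i), (0 : ι → R)) +
        ∑ i, x' i • ((0 : ι → R), Pi.single i (f i)) := by
    ext j <;> simp [Prod.fst_sum, Prod.snd_sum, Finset.sum_apply, Pi.single_apply, mul_comm]
  simp only [hsplit, map_add, map_sum, map_smul]

theorem hasDerivAt_update_comp {ι : Type*} [Fintype ι] [DecidableEq ι] {f : ι → ℝ → ℝ}
    {x : ι → ℝ} {d : ι} {f' : ℝ} (hf : HasDerivAt (f d) f' (x d)) :
    HasDerivAt (fun t c => f c (update x d t c)) (Pi.single d f') (x d) := by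
  rw [hasDerivAt_pi]
  intro c
  rcases eq_or_ne c d with rfl | hcd
  · simpa using hf
  · simpa [Function.update_of_ne hcd, Pi.single_eq_of_ne hcd] using
      hasDerivAt_const (x d) (f c (x c))

section NonseparableModel

variable {C dz : ℕ} [NeZero C]

noncomputable def studentCoord (ut1 : (Fin dz → ℝ) → ℝ → ℝ)
    (ut : Fin C → (Fin dz → ℝ) → ℝ → ℝ → ℝ) (z : Fin dz → ℝ) (a : ℝ) (c : Fin C) (s : ℝ) : ℝ :=
  if c = 0 then ut1 z a - s else ut c z s a

noncomputable def sigma0NSArg (ut1 : (Fin dz → ℝ) → ℝ → ℝ)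
    (ut : Fin C → (Fin dz → ℝ) → ℝ → ℝ → ℝ) (vt : Fin C → (Fin dz → ℝ) → ℝ → ℝ)
    (z : Fin dz → ℝ) (y w : Fin C → ℝ) (a : ℝ) : (Fin C → ℝ) × (Fin C → ℝ) :=
  (fun c => studentCoord ut1 ut z a c (y c), fun c => vt c z (w c))

/-- The coefficient of `∂σ₀/∂y_c` in `d/dt σ₀(ζ t, y, w, α t)`; for college `1` the partial
derivative of the argument of `Λ₀` in `y₁` is `-1`, whence the sign. -/
noncomputable def studentRate (ut1 : (Fin dz → ℝ) → ℝ → ℝ)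
    (ut : Fin C → (Fin dz → ℝ) → ℝ → ℝ → ℝ) (z : Fin dz → ℝ) (y : Fin C → ℝ) (a : ℝ)
    (ζ : ℝ → Fin dz → ℝ) (α : ℝ → ℝ) (t₀ : ℝ) : Fin C → ℝ := fun c =>
  if c = 0 then -deriv (fun t => ut1 (ζ t) (α t)) t₀
  else (deriv (fun s => ut c z s a) (y c))⁻¹ * deriv (fun t => ut c (ζ t) (y c) (α t)) t₀

noncomputable def collegeRate (vt : Fin C → (Fin dz → ℝ) → ℝ → ℝ) (z : Fin dz → ℝ)
    (w : Fin C → ℝ) (ζ : ℝ → Fin dz → ℝ) (t₀ : ℝ) : Fin C → ℝ := fun c =>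
  (deriv (fun s => vt c z s) (w c))⁻¹ * deriv (fun t => vt c (ζ t) (w c)) t₀

variable {Λ : ((Fin C → ℝ) × (Fin C → ℝ)) → ℝ} {ut1 : (Fin dz → ℝ) → ℝ → ℝ}
  {ut : Fin C → (Fin dz → ℝ) → ℝ → ℝ → ℝ} {vt : Fin C → (Fin dz → ℝ) → ℝ → ℝ}

theorem sigma0NS_eq_comp (z : Fin dz → ℝ) (y w : Fin C → ℝ) (a : ℝ) :
    sigma0NS C dz Λ ut1 ut vt z y w a = Λ (sigma0NSArg ut1 ut vt z y w a) := by
  simp only [sigma0NS, sigma0NSArg, studentCoord]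
  congr 2 with c
  split_ifs with hc <;> simp [hc]

theorem hasDerivAt_studentCoord
    (hut : ∀ c, c ≠ 0 → Differentiable ℝ (fun p : (Fin dz → ℝ) × ℝ × ℝ => ut c p.1 p.2.1 p.2.2))
    (z : Fin dz → ℝ) (a : ℝ) (c : Fin C) (s : ℝ) :
    HasDerivAt (studentCoord ut1 ut z a c)
      (if c = 0 then -1 else deriv (fun s => ut c z s a) s) s := by
  unfold studentCoord
  split_ifs with hc
  · simpa using (hasDerivAt_id s).const_sub (ut1 z a)
  · have := hut c hc
    exact DifferentiableAt.hasDerivAt (by fun_prop)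

theorem hasDerivAt_studentCoord_comp
    (hut1 : Differentiable ℝ (fun p : (Fin dz → ℝ) × ℝ => ut1 p.1 p.2))
    (hut : ∀ c, c ≠ 0 → Differentiable ℝ (fun p : (Fin dz → ℝ) × ℝ × ℝ => ut c p.1 p.2.1 p.2.2))
    {ζ : ℝ → Fin dz → ℝ} {α : ℝ → ℝ} {t₀ : ℝ} (hζ : DifferentiableAt ℝ ζ t₀)
    (hα : DifferentiableAt ℝ α t₀) (c : Fin C) (s : ℝ) :
    HasDerivAt (fun t => studentCoord ut1 ut (ζ t) (α t) c s)
      (if c = 0 then deriv (fun t => ut1 (ζ t) (α t)) t₀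
        else deriv (fun t => ut c (ζ t) s (α t)) t₀) t₀ := by
  unfold studentCoord
  split_ifs with hc
  · exact (DifferentiableAt.hasDerivAt (by fun_prop)).sub_const s
  · have := hut c hc
    exact DifferentiableAt.hasDerivAt (by fun_prop)

theorem hasDerivAt_sigma0NS_update_y (hΛ : Differentiable ℝ Λ)
    (hut : ∀ c, c ≠ 0 → Differentiable ℝ (fun p : (Fin dz → ℝ) × ℝ × ℝ => ut c p.1 p.2.1 p.2.2))
    (z : Fin dz → ℝ) (y w : Fin C → ℝ) (a : ℝ) (d : Fin C) :
    HasDerivAt (fun t => sigma0NS C dz Λ ut1 ut vt z (update y d t) w a)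
      (fderiv ℝ Λ (sigma0NSArg ut1 ut vt z y w a)
        (Pi.single d (if d = 0 then -1 else deriv (fun s => ut d z s a) (y d)), 0)) (y d) := by
  have hArg : HasDerivAt (fun t => sigma0NSArg ut1 ut vt z (update y d t) w a)
      (Pi.single d (if d = 0 then -1 else deriv (fun s => ut d z s a) (y d)), 0) (y d) :=
    (hasDerivAt_update_comp (hasDerivAt_studentCoord hut z a d (y d))).prodMk
      (hasDerivAt_const _ _)
  simp only [sigma0NS_eq_comp]
  exact (hΛ _).hasFDerivAt.comp_hasDerivAt_of_eq (y d) hArg (by simp)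

theorem hasDerivAt_sigma0NS_update_w (hΛ : Differentiable ℝ Λ)
    (hvt : ∀ c, Differentiable ℝ (fun p : (Fin dz → ℝ) × ℝ => vt c p.1 p.2))
    (z : Fin dz → ℝ) (y w : Fin C → ℝ) (a : ℝ) (d : Fin C) :
    HasDerivAt (fun t => sigma0NS C dz Λ ut1 ut vt z y (update w d t) a)
      (fderiv ℝ Λ (sigma0NSArg ut1 ut vt z y w a)
        (0, Pi.single d (deriv (fun s => vt d z s) (w d)))) (w d) := by
  have hvtd : DifferentiableAt ℝ (vt d z) (w d) := by have := hvt d; fun_prop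
  have hArg : HasDerivAt (fun t => sigma0NSArg ut1 ut vt z y (update w d t) a)
      (0, Pi.single d (deriv (fun s => vt d z s) (w d))) (w d) :=
    (hasDerivAt_const _ _).prodMk (hasDerivAt_update_comp (f := fun c => vt c z) hvtd.hasDerivAt)
  simp only [sigma0NS_eq_comp]
  exact (hΛ _).hasFDerivAt.comp_hasDerivAt_of_eq (w d) hArg (by simp)

theorem hasDerivAt_sigma0NS_comp (hΛ : Differentiable ℝ Λ)
    (hut1 : Differentiable ℝ (fun p : (Fin dz → ℝ) × ℝ => ut1 p.1 p.2))
    (hut : ∀ c, c ≠ 0 → Differentiable ℝ (fun p : (Fin dz → ℝ) × ℝ × ℝ => ut c p.1 p.2.1 p.2.2))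
    (hvt : ∀ c, Differentiable ℝ (fun p : (Fin dz → ℝ) × ℝ => vt c p.1 p.2))
    (y w : Fin C → ℝ) {ζ : ℝ → Fin dz → ℝ} {α : ℝ → ℝ} {t₀ : ℝ}
    (hζ : DifferentiableAt ℝ ζ t₀) (hα : DifferentiableAt ℝ α t₀) :
    HasDerivAt (fun t => sigma0NS C dz Λ ut1 ut vt (ζ t) y w (α t))
      (fderiv ℝ Λ (sigma0NSArg ut1 ut vt (ζ t₀) y w (α t₀))
        (fun c => if c = 0 then deriv (fun t => ut1 (ζ t) (α t)) t₀
            else deriv (fun t => ut c (ζ t) (y c) (α t)) t₀,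
          fun c => deriv (fun t => vt c (ζ t) (w c)) t₀)) t₀ := by
  have hvtc : ∀ c, DifferentiableAt ℝ (fun t => vt c (ζ t) (w c)) t₀ := fun c => by
    have := hvt c; fun_prop
  have hArg : HasDerivAt (fun t => sigma0NSArg ut1 ut vt (ζ t) y w (α t))
      (fun c => if c = 0 then deriv (fun t => ut1 (ζ t) (α t)) t₀
          else deriv (fun t => ut c (ζ t) (y c) (α t)) t₀,
        fun c => deriv (fun t => vt c (ζ t) (w c)) t₀) t₀ :=
    (hasDerivAt_pi.2 fun c => hasDerivAt_studentCoord_comp hut1 hut hζ hα c (y c)).prodMk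
      (hasDerivAt_pi.2 fun c => (hvtc c).hasDerivAt)
  simp only [sigma0NS_eq_comp]
  exact (hΛ _).hasFDerivAt.comp_hasDerivAt t₀ hArg

theorem deriv_sigma0NS_comp_eq_sum (hΛ : Differentiable ℝ Λ)
    (hut1 : Differentiable ℝ (fun p : (Fin dz → ℝ) × ℝ => ut1 p.1 p.2))
    (hut : ∀ c, c ≠ 0 → Differentiable ℝ (fun p : (Fin dz → ℝ) × ℝ × ℝ => ut c p.1 p.2.1 p.2.2))
    (hvt : ∀ c, Differentiable ℝ (fun p : (Fin dz → ℝ) × ℝ => vt c p.1 p.2))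
    {z : Fin dz → ℝ} {y w : Fin C → ℝ} {a : ℝ}
    (hutne : ∀ c, c ≠ 0 → deriv (fun s => ut c z s a) (y c) ≠ 0)
    (hvtne : ∀ c, deriv (fun s => vt c z s) (w c) ≠ 0)
    {ζ : ℝ → Fin dz → ℝ} {α : ℝ → ℝ} {t₀ : ℝ} (hζ : DifferentiableAt ℝ ζ t₀)
    (hα : DifferentiableAt ℝ α t₀) (hζ₀ : ζ t₀ = z) (hα₀ : α t₀ = a) :
    deriv (fun t => sigma0NS C dz Λ ut1 ut vt (ζ t) y w (α t)) t₀ =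
      ∑ d, studentRate ut1 ut z y a ζ α t₀ d *
          deriv (fun t => sigma0NS C dz Λ ut1 ut vt z (update y d t) w a) (y d) +
        ∑ d, collegeRate vt z w ζ t₀ d *
          deriv (fun t => sigma0NS C dz Λ ut1 ut vt z y (update w d t) a) (w d) := by
  subst hζ₀ hα₀
  simp only [(hasDerivAt_sigma0NS_comp hΛ hut1 hut hvt y w hζ hα).deriv,
    (hasDerivAt_sigma0NS_update_y hΛ hut _ y w _ _).deriv,
    (hasDerivAt_sigma0NS_update_w hΛ hvt _ y w _ _).deriv]
  have hstudent : (fun c => if c = 0 then deriv (fun t => ut1 (ζ t) (α t)) t₀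
      else deriv (fun t => ut c (ζ t) (y c) (α t)) t₀) =
      (fun c => if c = 0 then -1 else deriv (fun s => ut c (ζ t₀) s (α t₀)) (y c)) *
        studentRate ut1 ut (ζ t₀) y (α t₀) ζ α t₀ := by
    funext c
    by_cases hc : c = 0 <;> simp [studentRate, hc, hutne c]
  have hcollege : (fun c => deriv (fun t => vt c (ζ t) (w c)) t₀) =
      (fun c => deriv (fun s => vt c (ζ t₀) s) (w c)) * collegeRate vt (ζ t₀) w ζ t₀ := by
    funext c
    simp [collegeRate, hvtne c]
  rw [hstudent, hcollege]
  exact (fderiv ℝ Λ _).toLinearMap.map_prod_mul_eq_sum _ _ _ _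

theorem studentRate_update_zero (z : Fin dz → ℝ) (y : Fin C → ℝ) (a s : ℝ)
    (ζ : ℝ → Fin dz → ℝ) (α : ℝ → ℝ) (t₀ : ℝ) :
    studentRate ut1 ut z (update y 0 s) a ζ α t₀ = studentRate ut1 ut z y a ζ α t₀ := by
  funext c
  rcases eq_or_ne c 0 with hc | hc <;> simp [studentRate, hc, Function.update_of_ne]

theorem mulVec_rates_eq_deriv_sigma0NS (hΛ : Differentiable ℝ Λ)
    (hut1 : Differentiable ℝ (fun p : (Fin dz → ℝ) × ℝ => ut1 p.1 p.2))
    (hut : ∀ c, c ≠ 0 → Differentiable ℝ (fun p : (Fin dz → ℝ) × ℝ × ℝ => ut c p.1 p.2.1 p.2.2))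
    (hvt : ∀ c, Differentiable ℝ (fun p : (Fin dz → ℝ) × ℝ => vt c p.1 p.2))
    {z : Fin dz → ℝ} {y w : Fin C → ℝ} {a : ℝ}
    (hutne : ∀ c, c ≠ 0 → deriv (fun s => ut c z s a) (y c) ≠ 0)
    (hvtne : ∀ c, deriv (fun s => vt c z s) (w c) ≠ 0)
    {ζ : ℝ → Fin dz → ℝ} {α : ℝ → ℝ} {t₀ : ℝ} (hζ : DifferentiableAt ℝ ζ t₀)
    (hα : DifferentiableAt ℝ α t₀) (hζ₀ : ζ t₀ = z) (hα₀ : α t₀ = a)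
    (yh : Fin C ⊕ Fin C → ℝ) :
    (Matrix.of fun (m j : Fin C ⊕ Fin C) =>
        Sum.elim
          (fun d => deriv (fun t => sigma0NS C dz Λ ut1 ut vt z
              (update (update y 0 (yh m)) d t) w a) (update y 0 (yh m) d))
          (fun d => deriv (fun t => sigma0NS C dz Λ ut1 ut vt z
              (update y 0 (yh m)) (update w d t) a) (w d)) j).mulVec
      (Sum.elim (studentRate ut1 ut z y a ζ α t₀) (collegeRate vt z w ζ t₀)) =
    fun m => deriv (fun t => sigma0NS C dz Λ ut1 ut vt (ζ t) (update y 0 (yh m)) w (α t)) t₀ := by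
  funext m
  have hutne_row : ∀ c, c ≠ 0 → deriv (fun s => ut c z s a) (update y 0 (yh m) c) ≠ 0 :=
    fun c hc => by simpa [Function.update_of_ne hc] using hutne c hc
  rw [deriv_sigma0NS_comp_eq_sum hΛ hut1 hut hvt hutne_row hvtne hζ hα hζ₀ hα₀,
    studentRate_update_zero]
  simp only [Matrix.mulVec, dotProduct, Matrix.of_apply, Fintype.sum_sum_type, Sum.elim_inl,
    Sum.elim_inr, mul_comm]

end NonseparableModel

theorem stmt_14_general (C dz : ℕ) [NeZero C]
    (Λ Λ' : ((Fin C → ℝ) × (Fin C → ℝ)) → ℝ)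
    (ut1 ut1' : (Fin dz → ℝ) → ℝ → ℝ)
    (ut ut' : Fin C → (Fin dz → ℝ) → ℝ → ℝ → ℝ)
    (vt vt' : Fin C → (Fin dz → ℝ) → ℝ → ℝ)
    (hΛ : ContDiff ℝ 1 Λ) (hΛ' : ContDiff ℝ 1 Λ')
    (hut1 : ContDiff ℝ 1 (fun p : (Fin dz → ℝ) × ℝ => ut1 p.1 p.2))
    (hut1' : ContDiff ℝ 1 (fun p : (Fin dz → ℝ) × ℝ => ut1' p.1 p.2))
    (hut : ∀ c : Fin C, c ≠ 0 →
      ContDiff ℝ 1 (fun p : (Fin dz → ℝ) × ℝ × ℝ => ut c p.1 p.2.1 p.2.2))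
    (hut' : ∀ c : Fin C, c ≠ 0 →
      ContDiff ℝ 1 (fun p : (Fin dz → ℝ) × ℝ × ℝ => ut' c p.1 p.2.1 p.2.2))
    (hvt : ∀ c : Fin C, ContDiff ℝ 1 (fun p : (Fin dz → ℝ) × ℝ => vt c p.1 p.2))
    (hvt' : ∀ c : Fin C, ContDiff ℝ 1 (fun p : (Fin dz → ℝ) × ℝ => vt' c p.1 p.2))
    -- the two models induce the SAME unmatched probability
    (hσeq : ∀ (z : Fin dz → ℝ) (y w : Fin C → ℝ) (a : ℝ),
      sigma0NS C dz Λ ut1 ut vt z y w a = sigma0NS C dz Λ' ut1' ut' vt' z y w a)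
    -- nonvanishing of ∂ũ^c/∂y_c and ∂ṽ^c/∂w_c for both models
    (hutne : ∀ c : Fin C, c ≠ 0 → ∀ (z : Fin dz → ℝ) (yc a : ℝ),
      deriv (fun t => ut c z t a) yc ≠ 0)
    (hutne' : ∀ c : Fin C, c ≠ 0 → ∀ (z : Fin dz → ℝ) (yc a : ℝ),
      deriv (fun t => ut' c z t a) yc ≠ 0)
    (hvtne : ∀ (c : Fin C) (z : Fin dz → ℝ) (wc : ℝ),
      deriv (fun t => vt c z t) wc ≠ 0)
    (hvtne' : ∀ (c : Fin C) (z : Fin dz → ℝ) (wc : ℝ),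
      deriv (fun t => vt' c z t) wc ≠ 0)
    -- fixed point: z, w, a, and y (only the coordinates y_2,…,y_C matter)
    (z : Fin dz → ℝ) (w : Fin C → ℝ) (y : Fin C → ℝ) (a : ℝ)
    -- (ii) rank condition: 2C values of y_1 making the 2C×2C matrix of
    -- (∂σ₀/∂y, ∂σ₀/∂w)-derivatives invertible
    (hM2 : ∃ yh : Fin C ⊕ Fin C → ℝ,
      IsUnit (Matrix.of fun (m j : Fin C ⊕ Fin C) =>
        Sum.elim
          (fun d =>
            deriv
              (fun t => sigma0NS C dz Λ ut1 ut vt z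
                (Function.update (Function.update y 0 (yh m)) d t) w a)
              (Function.update y 0 (yh m) d))
          (fun d =>
            deriv
              (fun t => sigma0NS C dz Λ ut1 ut vt z
                (Function.update y 0 (yh m)) (Function.update w d t) a)
              (w d)) j)) :
    (deriv (fun t => ut1 z t) a = deriv (fun t => ut1' z t) a) ∧
    (∀ c : Fin C, c ≠ 0 →
      (deriv (fun t => ut c z t a) (y c))⁻¹ * deriv (fun t => ut c z (y c) t) a =
        (deriv (fun t => ut' c z t a) (y c))⁻¹ *
          deriv (fun t => ut' c z (y c) t) a) ∧
    (∀ k : Fin dz,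
      (deriv (fun t => ut1 (Function.update z k t) a) (z k) =
        deriv (fun t => ut1' (Function.update z k t) a) (z k)) ∧
      (∀ c : Fin C, c ≠ 0 →
        (deriv (fun t => ut c z t a) (y c))⁻¹ *
            deriv (fun t => ut c (Function.update z k t) (y c) a) (z k) =
          (deriv (fun t => ut' c z t a) (y c))⁻¹ *
            deriv (fun t => ut' c (Function.update z k t) (y c) a) (z k)) ∧
      (∀ c : Fin C,
        (deriv (fun t => vt c z t) (w c))⁻¹ *
            deriv (fun t => vt c (Function.update z k t) (w c)) (z k) =
          (deriv (fun t => vt' c z t) (w c))⁻¹ *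
            deriv (fun t => vt' c (Function.update z k t) (w c)) (z k))) := by
  obtain ⟨yh, hU⟩ := hM2
  have hσ : sigma0NS C dz Λ ut1 ut vt = sigma0NS C dz Λ' ut1' ut' vt' := by
    funext z y w a
    exact hσeq z y w a
  have hrates : ∀ {ζ : ℝ → Fin dz → ℝ} {α : ℝ → ℝ} {t₀ : ℝ}, DifferentiableAt ℝ ζ t₀ →
      DifferentiableAt ℝ α t₀ → ζ t₀ = z → α t₀ = a →
      Sum.elim (studentRate ut1 ut z y a ζ α t₀) (collegeRate vt z w ζ t₀) =
        Sum.elim (studentRate ut1' ut' z y a ζ α t₀) (collegeRate vt' z w ζ t₀) :=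
    fun hζ hα hζ₀ hα₀ => Matrix.mulVec_injective_iff_isUnit.mpr hU <| by
      rw [mulVec_rates_eq_deriv_sigma0NS (hΛ.differentiable one_ne_zero)
          (hut1.differentiable one_ne_zero) (fun c hc => (hut c hc).differentiable one_ne_zero)
          (fun c => (hvt c).differentiable one_ne_zero) (fun c hc => hutne c hc z (y c) a)
          (fun c => hvtne c z (w c)) hζ hα hζ₀ hα₀,
        hσ, mulVec_rates_eq_deriv_sigma0NS (hΛ'.differentiable one_ne_zero)
          (hut1'.differentiable one_ne_zero) (fun c hc => (hut' c hc).differentiable one_ne_zero)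
          (fun c => (hvt' c).differentiable one_ne_zero) (fun c hc => hutne' c hc z (y c) a)
          (fun c => hvtne' c z (w c)) hζ hα hζ₀ hα₀]
  have ha := hrates (ζ := fun _ => z) (α := fun t => t) (t₀ := a)
    (by fun_prop) (by fun_prop) rfl rfl
  refine ⟨by simpa [studentRate] using congrFun ha (.inl 0),
    fun c hc => by simpa [studentRate, hc] using congrFun ha (.inl c), fun k => ?_⟩
  have hz := hrates (ζ := Function.update z k) (α := fun _ => a) (t₀ := z k)
    (hasFDerivAt_update z _).differentiableAt (by fun_prop) (by simp) rfl
  exact ⟨by simpa [studentRate] using congrFun hz (.inl 0),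
    fun c hc => by simpa [studentRate, hc] using congrFun hz (.inl c),
    fun c => by simpa [collegeRate] using congrFun hz (.inr c)⟩

/-- Proposition B.1: if two nonseparable matching models in
inverse form induce the same unmatched probability `σ₀`, the relevant partial
derivatives of the inverse utility functions never vanish, and the two rank
conditions on the derivative matrices of `σ₀` hold (obtained by varying `y_1`),
then the derivatives `∂ũ¹/∂a`, `(∂ũ^c/∂y_c)⁻¹(∂ũ^c/∂a)`, `∂ũ¹/∂z_k`,
`(∂ũ^c/∂y_c)⁻¹(∂ũ^c/∂z_k)` and `(∂ṽ^c/∂w_c)⁻¹(∂ṽ^c/∂z_k)` coincide across the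
two models at the given point. -/
theorem stmt_14 (C dz : ℕ) [NeZero C] (hC : 1 ≤ C) (hdz : 1 ≤ dz)
    (Λ Λ' : ((Fin C → ℝ) × (Fin C → ℝ)) → ℝ)
    (ut1 ut1' : (Fin dz → ℝ) → ℝ → ℝ)
    (ut ut' : Fin C → (Fin dz → ℝ) → ℝ → ℝ → ℝ)
    (vt vt' : Fin C → (Fin dz → ℝ) → ℝ → ℝ)
    (hΛ : ContDiff ℝ 1 Λ) (hΛ' : ContDiff ℝ 1 Λ')
    (hut1 : ContDiff ℝ 1 (fun p : (Fin dz → ℝ) × ℝ => ut1 p.1 p.2))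
    (hut1' : ContDiff ℝ 1 (fun p : (Fin dz → ℝ) × ℝ => ut1' p.1 p.2))
    (hut : ∀ c : Fin C, c ≠ 0 →
      ContDiff ℝ 1 (fun p : (Fin dz → ℝ) × ℝ × ℝ => ut c p.1 p.2.1 p.2.2))
    (hut' : ∀ c : Fin C, c ≠ 0 →
      ContDiff ℝ 1 (fun p : (Fin dz → ℝ) × ℝ × ℝ => ut' c p.1 p.2.1 p.2.2))
    (hvt : ∀ c : Fin C, ContDiff ℝ 1 (fun p : (Fin dz → ℝ) × ℝ => vt c p.1 p.2))
    (hvt' : ∀ c : Fin C, ContDiff ℝ 1 (fun p : (Fin dz → ℝ) × ℝ => vt' c p.1 p.2))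
    -- the two models induce the SAME unmatched probability
    (hσeq : ∀ (z : Fin dz → ℝ) (y w : Fin C → ℝ) (a : ℝ),
      sigma0NS C dz Λ ut1 ut vt z y w a = sigma0NS C dz Λ' ut1' ut' vt' z y w a)
    -- nonvanishing of ∂ũ^c/∂y_c and ∂ṽ^c/∂w_c for both models
    (hutne : ∀ c : Fin C, c ≠ 0 → ∀ (z : Fin dz → ℝ) (yc a : ℝ),
      deriv (fun t => ut c z t a) yc ≠ 0)
    (hutne' : ∀ c : Fin C, c ≠ 0 → ∀ (z : Fin dz → ℝ) (yc a : ℝ),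
      deriv (fun t => ut' c z t a) yc ≠ 0)
    (hvtne : ∀ (c : Fin C) (z : Fin dz → ℝ) (wc : ℝ),
      deriv (fun t => vt c z t) wc ≠ 0)
    (hvtne' : ∀ (c : Fin C) (z : Fin dz → ℝ) (wc : ℝ),
      deriv (fun t => vt' c z t) wc ≠ 0)
    -- fixed point: z, w, a, and y (only the coordinates y_2,…,y_C matter)
    (z : Fin dz → ℝ) (w : Fin C → ℝ) (y : Fin C → ℝ) (a : ℝ)
    -- (i) rank condition: C values of y_1 making the C×C matrix of
    -- ∂σ₀/∂y-derivatives invertible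
    (hM1 : ∃ y1 : Fin C → ℝ,
      IsUnit (Matrix.of fun m d : Fin C =>
        deriv
          (fun t => sigma0NS C dz Λ ut1 ut vt z
            (Function.update (Function.update y 0 (y1 m)) d t) w a)
          (Function.update y 0 (y1 m) d)))
    -- (ii) rank condition: 2C values of y_1 making the 2C×2C matrix of
    -- (∂σ₀/∂y, ∂σ₀/∂w)-derivatives invertible
    (hM2 : ∃ yh : Fin C ⊕ Fin C → ℝ,
      IsUnit (Matrix.of fun (m j : Fin C ⊕ Fin C) =>
        Sum.elim
          (fun d =>
            deriv
              (fun t => sigma0NS C dz Λ ut1 ut vt z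
                (Function.update (Function.update y 0 (yh m)) d t) w a)
              (Function.update y 0 (yh m) d))
          (fun d =>
            deriv
              (fun t => sigma0NS C dz Λ ut1 ut vt z
                (Function.update y 0 (yh m)) (Function.update w d t) a)
              (w d)) j)) :
    (deriv (fun t => ut1 z t) a = deriv (fun t => ut1' z t) a) ∧
    (∀ c : Fin C, c ≠ 0 →
      (deriv (fun t => ut c z t a) (y c))⁻¹ * deriv (fun t => ut c z (y c) t) a =
        (deriv (fun t => ut' c z t a) (y c))⁻¹ *
          deriv (fun t => ut' c z (y c) t) a) ∧
    (∀ k : Fin dz,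
      (deriv (fun t => ut1 (Function.update z k t) a) (z k) =
        deriv (fun t => ut1' (Function.update z k t) a) (z k)) ∧
      (∀ c : Fin C, c ≠ 0 →
        (deriv (fun t => ut c z t a) (y c))⁻¹ *
            deriv (fun t => ut c (Function.update z k t) (y c) a) (z k) =
          (deriv (fun t => ut' c z t a) (y c))⁻¹ *
            deriv (fun t => ut' c (Function.update z k t) (y c) a) (z k)) ∧
      (∀ c : Fin C,
        (deriv (fun t => vt c z t) (w c))⁻¹ *
            deriv (fun t => vt c (Function.update z k t) (w c)) (z k) =
          (deriv (fun t => vt' c z t) (w c))⁻¹ *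
            deriv (fun t => vt' c (Function.update z k t) (w c)) (z k))) :=
  stmt_14_general C dz Λ Λ' ut1 ut1' ut ut' vt vt' hΛ hΛ' hut1 hut1' hut hut' hvt hvt' hσeq hutne
    hutne' hvtne hvtne' z w y a hM2
end
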